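/- arXiv:2411.00250 — 2 statements merged into one kernel-verified Lean document; each statement's English description precedes it below -/
import Mathlib

section
/- Let d ≥ 1 be an integer. Then the signed adjacency matrix A_{2d,d} of the Johnson graph J(2d,d) is a symmetric weighing matrix of weight d² and order C(2d,d): all entries of A_{2d,d} lie in {0, 1, −1} and A_{2d,d} · A_{2d,d}ᵀ = d² · I. -/
/-!
Let `W_{n,d}` be the signed inclusion matrix of `d`-sets into `(d+1)`-sets, the boundary map of
the simplex on `n` vertices, so that `W_{n,d} W_{n,d+1} = 0`. Its two Gram matrices are
`W_{n,d-1}ᵀ W_{n,d-1} = d I + A_{n,d}` and `W_{n,d} W_{n,d}ᵀ = (n - d) I - A_{n,d}`: an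
off-diagonal entry is a single product of two signs, which is `±(-1)^{h(α,β)}` when
`|α ∆ β| = 2` and absent otherwise. For `n = 2d` the two Gram matrices are `d I ± A`, hence
`(d I + A)(d I - A) = W_{n,d-1}ᵀ (W_{n,d-1} W_{n,d}) W_{n,d}ᵀ = 0`, that is `A² = d² I`.
-/

open Matrix Polynomial

/-- `S(G)`: real symmetric matrices whose off-diagonal zero/nonzero pattern
matches the adjacency of `G`; the diagonal is unconstrained. -/
def Sset {V : Type*} [Fintype V] [DecidableEq V] (G : SimpleGraph V) : Set (Matrix V V ℝ) :=
  {M | M.IsSymm ∧ ∀ u v : V, u ≠ v → (M u v ≠ 0 ↔ G.Adj u v)}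

/-- `q(G)`: the minimum number of distinct eigenvalues over matrices in `S(G)`. -/
noncomputable def minQ {V : Type*} [Fintype V] [DecidableEq V] (G : SimpleGraph V) : ℕ :=
  sInf {k : ℕ | ∃ M ∈ Sset G, (spectrum ℝ M).ncard = k}

/-- The Johnson graph `J(n,d)`: vertices are the `d`-element subsets of an `n`-set,
adjacent iff their symmetric difference has two elements. -/
def Johnson (n d : ℕ) : SimpleGraph {s : Finset (Fin n) // s.card = d} where
  Adj α β := (symmDiff α.1 β.1).card = 2
  symm := ⟨by intro a b h; rwa [symmDiff_comm]⟩
  loopless := ⟨by intro a h; simp [symmDiff_self] at h⟩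

/-- For `d`-subsets `α, β` with `α ∆ β = {i, j}`, `i < j`, this is
`h(α,β) = |{ℓ ∈ α ∩ β : i < ℓ < j}|`. -/
def hjExp {n : ℕ} (α β : Finset (Fin n)) : ℕ :=
  ((α ∩ β).filter (fun l => (∃ i ∈ symmDiff α β, i < l) ∧ ∃ j ∈ symmDiff α β, l < j)).card

/-- The signed adjacency matrix `A_{n,d}` of the Johnson graph `J(n,d)`:
`A(α,β) = (-1)^{h(α,β)}` when `|α ∆ β| = 2` and `0` otherwise. -/
def Ajohnson (n d : ℕ) :
    Matrix {s : Finset (Fin n) // s.card = d} {s : Finset (Fin n) // s.card = d} ℝ :=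
  fun α β => if (symmDiff α.1 β.1).card = 2 then (-1 : ℝ) ^ hjExp α.1 β.1 else 0

/-- The matrix `W_{n,d}`, rows indexed by `d`-subsets and columns by `(d+1)`-subsets of
an `n`-set: `W(α,β) = (-1)^{|{y ∈ β : y < x}|}` when `α ⊆ β` with `β \ α = {x}`, else `0`. -/
def Wj (n d : ℕ) :
    Matrix {s : Finset (Fin n) // s.card = d} {s : Finset (Fin n) // s.card = d + 1} ℝ :=
  fun α β => if α.1 ⊆ β.1 then
      (-1 : ℝ) ^ ((β.1.filter (fun y => ∃ x ∈ β.1 \ α.1, y < x)).card)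
    else 0

/-- `P_{n,d} := W_{n,d} · W_{n,d}ᵀ`. -/
noncomputable def Pj (n d : ℕ) := Wj n d * (Wj n d)ᵀ

open Finset
open scoped symmDiff

namespace Finset

variable {α : Type*} [DecidableEq α] {s t u : Finset α} {k : ℕ}

theorem card_symmDiff (s t : Finset α) : #(s ∆ t) = #(s \ t) + #(t \ s) :=
  card_union_of_disjoint disjoint_sdiff_sdiff

theorem neg_one_pow_card_mul_neg_one_pow_card {R : Type*} [Monoid R] [HasDistribNeg R]
    (s t : Finset α) : (-1 : R) ^ #s * (-1) ^ #t = (-1) ^ #(s ∆ t) := by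
  rw [← pow_add, ← card_sdiff_add_card_inter s t, ← card_sdiff_add_card_inter t s,
    inter_comm t s, card_symmDiff, add_add_add_comm, ← two_mul, pow_add, pow_mul]
  simp

theorem card_sdiff_pos_of_card_eq (hst : #s = #t) (hne : s ≠ t) : 0 < #(s \ t) := by
  by_contra! h
  have hsub : s ⊆ t := sdiff_eq_empty_iff_subset.1 (card_eq_zero.1 (by omega))
  exact hne (eq_of_subset_of_card_le hsub hst.ge)

theorem eq_inter_and_card_symmDiff_of_subset (hs : #s = k + 1) (ht : #t = k + 1) (hne : s ≠ t)
    (hu : #u = k) (hus : u ⊆ s) (hut : u ⊆ t) : u = s ∩ t ∧ #(s ∆ t) = 2 := by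
  have hpos := card_sdiff_pos_of_card_eq (hs.trans ht.symm) hne
  have hle := card_le_card (subset_inter hus hut)
  have := card_sdiff_add_card_inter s t
  have := card_sdiff_comm (hs.trans ht.symm)
  exact ⟨eq_of_subset_of_card_le (subset_inter hus hut) (by omega),
    by rw [card_symmDiff]; omega⟩

theorem eq_union_and_card_symmDiff_of_subset (hs : #s = k) (ht : #t = k) (hne : s ≠ t)
    (hu : #u = k + 1) (hsu : s ⊆ u) (htu : t ⊆ u) : u = s ∪ t ∧ #(s ∆ t) = 2 := by
  have hpos := card_sdiff_pos_of_card_eq (hs.trans ht.symm) hne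
  have hle := card_le_card (union_subset hsu htu)
  have := card_sdiff_add_card s t
  have := card_sdiff_comm (hs.trans ht.symm)
  exact ⟨(eq_of_subset_of_card_le (union_subset hsu htu) (by omega)).symm,
    by rw [card_symmDiff]; omega⟩

theorem insert_inter_insert_of_notMem {z x : α} (hz : z ∉ u) (hx : x ∉ u) (hzx : z ≠ x) :
    insert z u ∩ insert x u = u := by
  rw [insert_inter_of_notMem (by simp [hzx, hz]), inter_insert_of_notMem hx, inter_self]

theorem insert_symmDiff_insert_of_notMem {z x : α} (hz : z ∉ u) (hx : x ∉ u) (hzx : z ≠ x) :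
    insert z u ∆ insert x u = {z, x} := by
  ext l
  simp only [mem_symmDiff, mem_insert, mem_singleton]
  grind

theorem exists_eq_insert_of_card_symmDiff_eq_two (hst : #s = #t) (h : #(s ∆ t) = 2) :
    ∃ u z x, z ∉ u ∧ x ∉ u ∧ z ≠ x ∧ s = insert z u ∧ t = insert x u := by
  have hcomm := card_sdiff_comm hst
  rw [card_symmDiff] at h
  obtain ⟨z, hz, hzs⟩ := exists_eq_insert_iff (s := s ∩ t) (t := s) |>.2
    ⟨inter_subset_left, by have := card_sdiff_add_card_inter s t; omega⟩
  obtain ⟨x, hx, hxt⟩ := exists_eq_insert_iff (s := s ∩ t) (t := t) |>.2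
    ⟨inter_subset_right, by rw [inter_comm]; have := card_sdiff_add_card_inter t s; omega⟩
  refine ⟨s ∩ t, z, x, hz, hx, ?_, hzs.symm, hxt.symm⟩
  rintro rfl
  exact hz (mem_inter.2 ⟨hzs ▸ mem_insert_self _ _, hxt ▸ mem_insert_self _ _⟩)

theorem exists_insert_insert_eq_of_subset (hus : u ⊆ s) (hs : #s = #u + 2) :
    ∃ z x, z ∉ u ∧ x ∉ u ∧ z ≠ x ∧ insert z (insert x u) = s := by
  obtain ⟨z, x, hzx, hsu⟩ := card_eq_two.1 <| show #(s \ u) = 2 by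
    rw [card_sdiff_of_subset hus]; omega
  refine ⟨z, x, (mem_sdiff.1 (hsu ▸ mem_insert_self z {x})).2,
    (mem_sdiff.1 (hsu ▸ mem_insert_of_mem (mem_singleton_self x))).2, hzx, ?_⟩
  rw [← union_sdiff_of_subset hus, hsu, union_comm, insert_union, insert_eq x u]

theorem eq_insert_or_eq_insert_of_subset {z x : α} (hut : u ⊆ t)
    (hts : t ⊆ insert z (insert x u)) (ht : #t = #u + 1) : t = insert z u ∨ t = insert x u := by
  obtain ⟨w, hw, hwt⟩ := exists_eq_insert_iff.2 ⟨hut, ht.symm⟩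
  have hwzx := hts (hwt ▸ mem_insert_self w u)
  simp only [mem_insert, hw, or_false] at hwzx
  rcases hwzx with rfl | rfl
  exacts [.inl hwt.symm, .inr hwt.symm]

end Finset

def insertSign {n : ℕ} (s : Finset (Fin n)) (w : Fin n) : ℝ := (-1) ^ #{y ∈ s | y < w}

section insertSign

variable {n : ℕ} {γ : Finset (Fin n)} {z x : Fin n}

theorem insertSign_mul_self (s : Finset (Fin n)) (w : Fin n) :
    insertSign s w * insertSign s w = 1 := by
  simp [insertSign, ← pow_add, ← two_mul, pow_mul]

theorem insertSign_insert (hz : z ∉ γ) (x : Fin n) :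
    insertSign (insert z γ) x = (if z < x then -1 else 1) * insertSign γ x := by
  unfold insertSign
  rw [filter_insert]
  split_ifs
  · rw [card_insert_of_notMem (by simp [hz]), pow_succ, mul_comm]
  · rw [one_mul]

theorem insertSign_mul_insertSign (hz : z ∉ γ) (hx : x ∉ γ) (hzx : z ≠ x) :
    insertSign γ z * insertSign γ x = (-1) ^ hjExp (insert z γ) (insert x γ) := by
  rw [insertSign, insertSign, neg_one_pow_card_mul_neg_one_pow_card, hjExp,
    insert_inter_insert_of_notMem hz hx hzx, insert_symmDiff_insert_of_notMem hz hx hzx]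
  congr 2
  -- the points of `γ` below exactly one of `z`, `x` are those strictly between them
  ext l
  simp only [mem_symmDiff, mem_filter, mem_insert, mem_singleton, exists_eq_or_imp,
    exists_eq_left]
  have : l ∈ γ → l ≠ z ∧ l ≠ x := fun hl =>
    ⟨ne_of_mem_of_not_mem hl hz, ne_of_mem_of_not_mem hl hx⟩
  grind

theorem insertSign_insert_mul_insertSign_insert (hz : z ∉ γ) (hx : x ∉ γ) (hzx : z ≠ x) :
    insertSign (insert z γ) x * insertSign (insert x γ) z =
      -(insertSign γ z * insertSign γ x) := by
  rw [insertSign_insert hz, insertSign_insert hx]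
  rcases hzx.lt_or_gt with h | h <;> simp [h, h.not_gt] <;> ring

theorem insertSign_mul_insertSign_insert_add (hz : z ∉ γ) (hx : x ∉ γ) (hzx : z ≠ x) :
    insertSign γ z * insertSign (insert z γ) x +
      insertSign γ x * insertSign (insert x γ) z = 0 := by
  rw [insertSign_insert hz, insertSign_insert hx]
  rcases hzx.lt_or_gt with h | h <;> simp [h, h.not_gt] <;> ring

end insertSign

section Wj

variable {n d : ℕ}

theorem Wj_apply_of_not_subset {α : {s : Finset (Fin n) // #s = d}}
    {σ : {s : Finset (Fin n) // #s = d + 1}} (h : ¬ α.1 ⊆ σ.1) : Wj n d α σ = 0 :=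
  if_neg h

theorem Wj_apply_of_insert_eq {α : {s : Finset (Fin n) // #s = d}}
    {σ : {s : Finset (Fin n) // #s = d + 1}} {w : Fin n} (hw : w ∉ α.1)
    (h : insert w α.1 = σ.1) : Wj n d α σ = insertSign α.1 w := by
  rw [Wj, if_pos (h ▸ subset_insert w α.1), ← h, insert_sdiff_cancel hw, filter_insert]
  simp [insertSign]

theorem Wj_apply_mul_self (α : {s : Finset (Fin n) // #s = d})
    (σ : {s : Finset (Fin n) // #s = d + 1}) :
    Wj n d α σ * Wj n d α σ = if α.1 ⊆ σ.1 then 1 else 0 := by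
  split_ifs with h
  · obtain ⟨w, hw, hσ⟩ := exists_eq_insert_iff.2 ⟨h, by rw [α.2, σ.2]⟩
    rw [Wj_apply_of_insert_eq hw hσ, insertSign_mul_self]
  · rw [Wj_apply_of_not_subset h, zero_mul]

theorem subset_of_Wj_mul_Wj_ne_zero {d' : ℕ} {α : {s : Finset (Fin n) // #s = d}}
    {σ : {s : Finset (Fin n) // #s = d + 1}} {α' : {s : Finset (Fin n) // #s = d'}}
    {σ' : {s : Finset (Fin n) // #s = d' + 1}} (h : Wj n d α σ * Wj n d' α' σ' ≠ 0) :
    α.1 ⊆ σ.1 ∧ α'.1 ⊆ σ'.1 := by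
  by_contra h'
  rcases not_and_or.1 h' with h' | h' <;> simp [Wj_apply_of_not_subset h'] at h

theorem card_filter_subset (s : Finset (Fin n)) (k : ℕ) :
    #{γ : {t : Finset (Fin n) // #t = k} | γ.1 ⊆ s} = (#s).choose k := by
  rw [← card_powersetCard, ← card_map (Function.Embedding.subtype _)]
  congr 1
  ext t
  simp [mem_powersetCard, and_comm]

theorem card_filter_superset (α : {s : Finset (Fin n) // #s = d}) :
    #{σ : {s : Finset (Fin n) // #s = d + 1} | α.1 ⊆ σ.1} = n - d := by
  rw [show n - d = #α.1ᶜ by rw [card_compl, Fintype.card_fin, α.2]]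
  symm
  refine card_bij
    (fun w hw => ⟨insert w α.1, by rw [card_insert_of_notMem (mem_compl.1 hw), α.2]⟩)
    (fun w _ => by simp [subset_insert]) (fun w hw w' _ h => ?_) (fun σ hσ => ?_)
  · exact (insert_inj (mem_compl.1 hw)).1 (congrArg Subtype.val h)
  · obtain ⟨w, hw, hσ⟩ :=
      exists_eq_insert_iff.2 ⟨(mem_filter.1 hσ).2, by rw [α.2, σ.2]⟩
    exact ⟨w, mem_compl.2 hw, Subtype.ext hσ⟩

theorem hjExp_comm (s t : Finset (Fin n)) : hjExp s t = hjExp t s := by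
  rw [hjExp, hjExp, inter_comm, symmDiff_comm]

theorem Ajohnson_isSymm (n d : ℕ) : (Ajohnson n d).IsSymm := by
  ext α β
  simp only [transpose_apply, Ajohnson, symmDiff_comm β.1, hjExp_comm β.1]

theorem Ajohnson_apply_self (α : {s : Finset (Fin n) // #s = d}) : Ajohnson n d α α = 0 := by
  simp [Ajohnson]

theorem Ajohnson_apply_eq_zero_or_eq_one_or_eq_neg_one (α β : {s : Finset (Fin n) // #s = d}) :
    Ajohnson n d α β = 0 ∨ Ajohnson n d α β = 1 ∨ Ajohnson n d α β = -1 := by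
  unfold Ajohnson
  split_ifs
  · exact Or.inr (neg_one_pow_eq_or ℝ _)
  · exact Or.inl rfl

theorem Wj_transpose_mul_Wj_apply_of_ne {α β : {s : Finset (Fin n) // #s = d + 1}}
    (hne : α ≠ β) : ((Wj n d)ᵀ * Wj n d) α β = Ajohnson n (d + 1) α β := by
  have hsupport : ∀ γ, Wj n d γ α * Wj n d γ β ≠ 0 →
      γ.1 = α.1 ∩ β.1 ∧ #(α.1 ∆ β.1) = 2 :=
    fun γ h =>
      have ⟨hα, hβ⟩ := subset_of_Wj_mul_Wj_ne_zero h
      eq_inter_and_card_symmDiff_of_subset α.2 β.2 (Subtype.coe_ne_coe.2 hne) γ.2 hα hβ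
  simp only [mul_apply, transpose_apply, Ajohnson]
  split_ifs with hadj
  · obtain ⟨γ, z, x, hz, hx, hzx, hα, hβ⟩ :=
      exists_eq_insert_of_card_symmDiff_eq_two (α.2.trans β.2.symm) hadj
    have hγ : #γ = d := by have := α.2; rw [hα, card_insert_of_notMem hz] at this; omega
    have hαβ : α.1 ∩ β.1 = γ := by rw [hα, hβ, insert_inter_insert_of_notMem hz hx hzx]
    rw [Fintype.sum_eq_single ⟨γ, hγ⟩ fun γ' hγ' =>
        by_contra fun h => hγ' (Subtype.ext ((hsupport γ' h).1.trans hαβ)),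
      Wj_apply_of_insert_eq hz hα.symm, Wj_apply_of_insert_eq hx hβ.symm,
      insertSign_mul_insertSign hz hx hzx, hα, hβ]
  · exact sum_eq_zero fun γ _ => by_contra fun h => hadj (hsupport γ h).2

theorem Wj_mul_Wj_transpose_apply_of_ne {α β : {s : Finset (Fin n) // #s = d}} (hne : α ≠ β) :
    (Wj n d * (Wj n d)ᵀ) α β = -Ajohnson n d α β := by
  have hsupport : ∀ σ, Wj n d α σ * Wj n d β σ ≠ 0 →
      σ.1 = α.1 ∪ β.1 ∧ #(α.1 ∆ β.1) = 2 :=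
    fun σ h =>
      have ⟨hα, hβ⟩ := subset_of_Wj_mul_Wj_ne_zero h
      eq_union_and_card_symmDiff_of_subset α.2 β.2 (Subtype.coe_ne_coe.2 hne) σ.2 hα hβ
  simp only [mul_apply, transpose_apply, Ajohnson]
  split_ifs with hadj
  · obtain ⟨γ, z, x, hz, hx, hzx, hα, hβ⟩ :=
      exists_eq_insert_of_card_symmDiff_eq_two (α.2.trans β.2.symm) hadj
    have hxα : x ∉ α.1 := by simp [hα, hzx.symm, hx]
    have hzβ : z ∉ β.1 := by simp [hβ, hzx, hz]
    have hαβ : insert x α.1 = α.1 ∪ β.1 := by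
      rw [hα, hβ, insert_union, union_insert, union_self, insert_comm]
    have hβα : insert z β.1 = α.1 ∪ β.1 := by
      rw [hα, hβ, insert_union, union_insert, union_self]
    have hσ : #(α.1 ∪ β.1) = d + 1 := by rw [← hαβ, card_insert_of_notMem hxα, α.2]
    rw [Fintype.sum_eq_single ⟨α.1 ∪ β.1, hσ⟩ fun σ hσ =>
        by_contra fun h => hσ (Subtype.ext (hsupport σ h).1),
      Wj_apply_of_insert_eq hxα hαβ, Wj_apply_of_insert_eq hzβ hβα, hα, hβ,
      insertSign_insert_mul_insertSign_insert hz hx hzx, insertSign_mul_insertSign hz hx hzx]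
  · rw [neg_zero]
    exact sum_eq_zero fun σ _ => by_contra fun h => hadj (hsupport σ h).2

theorem Wj_transpose_mul_Wj (n d : ℕ) :
    (Wj n d)ᵀ * Wj n d = ((d + 1 : ℕ) : ℝ) • 1 + Ajohnson n (d + 1) := by
  ext α β
  rcases eq_or_ne α β with rfl | hne
  · simp [mul_apply, Wj_apply_mul_self, sum_boole, card_filter_subset, α.2, Ajohnson_apply_self]
  · simp [Wj_transpose_mul_Wj_apply_of_ne hne, one_apply_ne hne]

theorem Wj_mul_Wj_transpose (n d : ℕ) :
    Wj n d * (Wj n d)ᵀ = ((n - d : ℕ) : ℝ) • 1 - Ajohnson n d := by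
  ext α β
  rcases eq_or_ne α β with rfl | hne
  · simp [mul_apply, Wj_apply_mul_self, sum_boole, card_filter_superset, Ajohnson_apply_self]
  · simp [Wj_mul_Wj_transpose_apply_of_ne hne, one_apply_ne hne]

theorem Wj_mul_Wj_succ (n d : ℕ) : Wj n d * Wj n (d + 1) = 0 := by
  ext γ β
  rw [mul_apply, Matrix.zero_apply]
  by_cases hγβ : γ.1 ⊆ β.1
  swap
  · exact sum_eq_zero fun σ _ => by_contra fun h =>
      hγβ ((subset_of_Wj_mul_Wj_ne_zero h).1.trans (subset_of_Wj_mul_Wj_ne_zero h).2)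
  obtain ⟨z, x, hz, hx, hzx, hβ⟩ :=
    exists_insert_insert_eq_of_subset hγβ (by rw [β.2, γ.2])
  have hzx' : z ∉ insert x γ.1 := by simp [hzx, hz]
  have hxz' : x ∉ insert z γ.1 := by simp [hzx.symm, hx]
  let σz : {s : Finset (Fin n) // #s = d + 1} :=
    ⟨insert z γ.1, by rw [card_insert_of_notMem hz, γ.2]⟩
  let σx : {s : Finset (Fin n) // #s = d + 1} :=
    ⟨insert x γ.1, by rw [card_insert_of_notMem hx, γ.2]⟩
  have hσ : σz ≠ σx := fun h => hzx ((insert_inj hz).1 (congrArg Subtype.val h))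
  rw [Fintype.sum_eq_add σz σx hσ ?_, Wj_apply_of_insert_eq hz rfl, Wj_apply_of_insert_eq hx rfl,
    Wj_apply_of_insert_eq hxz' (insert_comm x z γ.1 ▸ hβ), Wj_apply_of_insert_eq hzx' hβ,
    insertSign_mul_insertSign_insert_add hz hx hzx]
  rintro σ ⟨hσz, hσx⟩
  by_contra h
  obtain ⟨hγσ, hσβ⟩ := subset_of_Wj_mul_Wj_ne_zero h
  rcases eq_insert_or_eq_insert_of_subset hγσ (hβ ▸ hσβ) (by rw [σ.2, γ.2]) with h | h
  exacts [hσz (Subtype.ext h), hσx (Subtype.ext h)]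

end Wj

/-- For `d ≥ 1`, the signed adjacency matrix `A_{2d,d}` of the Johnson
graph `J(2d,d)` is a symmetric weighing matrix of weight `d²` and order `C(2d,d)`:
its entries lie in `{0, 1, −1}` and `A·Aᵀ = d²·I`. -/
theorem stmt_14 (d : ℕ) (hd : 1 ≤ d) :
    (Ajohnson (2 * d) d).IsSymm ∧
    (∀ α β, Ajohnson (2 * d) d α β = 0 ∨ Ajohnson (2 * d) d α β = 1 ∨
      Ajohnson (2 * d) d α β = -1) ∧
    Ajohnson (2 * d) d * (Ajohnson (2 * d) d)ᵀ = ((d : ℝ) ^ 2) • (1 : Matrix _ _ ℝ) := by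
  obtain ⟨e, rfl⟩ := Nat.exists_eq_add_of_le' hd
  set A := Ajohnson (2 * (e + 1)) (e + 1)
  set c : ℝ := ((e + 1 : ℕ) : ℝ)
  have hsymm : A.IsSymm := Ajohnson_isSymm _ _
  refine ⟨hsymm, Ajohnson_apply_eq_zero_or_eq_one_or_eq_neg_one, ?_⟩
  have hlower : (Wj (2 * (e + 1)) e)ᵀ * Wj (2 * (e + 1)) e = c • 1 + A :=
    Wj_transpose_mul_Wj _ _
  have hupper : Wj (2 * (e + 1)) (e + 1) * (Wj (2 * (e + 1)) (e + 1))ᵀ = c • 1 - A := by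
    rw [Wj_mul_Wj_transpose, show 2 * (e + 1) - (e + 1) = e + 1 by omega]
  have hfactor : (c • 1 + A) * (c • 1 - A) = 0 := by
    rw [← hlower, ← hupper, Matrix.mul_assoc, ← Matrix.mul_assoc (Wj _ e), Wj_mul_Wj_succ,
      Matrix.zero_mul, Matrix.mul_zero]
  have hdiff := ((Commute.one_left A).smul_left c).mul_self_sub_mul_self_eq
  rw [hfactor, smul_mul_smul_comm, one_mul, ← sq, sub_eq_zero] at hdiff
  rw [hsymm.eq, hdiff]
end

section
/- Let n and d be positive integers with n ≥ 2d. Let S be a set of d-element subsets of {1,…,n}. (i) If |S| = C(n−1, d) + 1, then there exists α ∈ S such that at least n − d elements β ∈ S satisfy |α △ β| = 2; that is, the subgraph of the Johnson graph J(n,d) induced on S has maximum degree at least n − d. (ii) If |S| = C(n−1, d−1) + 1, then there exists α ∈ S such that at least d elements β ∈ S satisfy |α △ β| = 2; that is, the induced subgraph has maximum degree at least d. -/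
open Matrix Polynomial

/-! The signed inclusion matrix `Wj n k` satisfies `Wj n k * Wj n (k + 1) = 0` (the boundary of a
boundary vanishes), which writes every column of `Wj n k` as a combination of the columns indexed
by sets containing `0`; hence `rank (Wj n k) ≤ C(n - 1, k)`.

If `#S` exceeds this rank, the rows of `Wj n d` indexed by `S` (for (ii): the columns of
`Wj n (d - 1)` indexed by `S`) are linearly dependent, and a dependency `x ≠ 0` lies in the kernel
of their Gram matrix. That Gram matrix has diagonal `n - d` (resp. `d`), the
number of `(d + 1)`-supersets (resp. `(d - 1)`-subsets) of a `d`-set, and off-diagonal entries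
of absolute value at most `1`, vanishing unless the two sets are adjacent in `J(n, d)`. At a
coordinate where the kernel vector is largest in absolute value, this forces at least `n - d`
(resp. `d`) neighbours in `S`. -/

open Finset Matrix Module

section Counting

variable {ι : Type*} [DecidableEq ι]

lemma card_symmDiff_of_card_eq {s t : Finset ι} (h : #s = #t) :
    #(symmDiff s t) = 2 * #(t \ s) := by
  rw [symmDiff_def, sup_eq_union, card_union_of_disjoint disjoint_sdiff_sdiff, card_sdiff_comm h,
    two_mul]

lemma one_le_card_sdiff_of_card_eq {s t : Finset ι} (h : #s = #t) (hst : s ≠ t) :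
    1 ≤ #(t \ s) :=
  card_pos.2 (sdiff_nonempty.2 fun hts => hst (eq_of_subset_of_card_le hts h.le).symm)

lemma eq_erase_of_subset_of_card_succ {β γ : Finset ι} (hβγ : β ⊆ γ) (hcard : #β + 1 = #γ) :
    ∃ z ∈ γ \ β, β = γ.erase z := by
  obtain ⟨z, hzβ, rfl⟩ := exists_eq_insert_iff.2 ⟨hβγ, hcard⟩
  exact ⟨z, by simp [hzβ], (erase_insert hzβ).symm⟩

variable [Fintype ι]

lemma card_filter_mem_eq_choose (x : ι) (k : ℕ) :
    #{β : {β : Finset ι // #β = k + 1} | x ∈ β.1} = (Fintype.card ι - 1).choose k := by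
  rw [← card_univ, ← card_erase_of_mem (mem_univ x), ← card_powersetCard]
  refine card_bij (fun β _ => β.1.erase x) (fun β hβ => ?_) (fun β hβ β' hβ' h => ?_) fun τ hτ => ?_
  · rw [mem_filter] at hβ
    rw [mem_powersetCard, card_erase_of_mem hβ.2, β.2]
    exact ⟨erase_subset_erase x (subset_univ _), rfl⟩
  · rw [mem_filter] at hβ hβ'
    exact Subtype.ext (by rw [← insert_erase hβ.2, ← insert_erase hβ'.2, h])
  · rw [mem_powersetCard] at hτ
    have hxτ : x ∉ τ := fun h => (mem_erase.1 (hτ.1 h)).1 rfl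
    refine ⟨⟨insert x τ, by rw [card_insert_of_notMem hxτ, hτ.2]⟩, by simp, erase_insert hxτ⟩

lemma card_supersets_of_card_succ {s : Finset ι} {d : ℕ} (hs : #s = d) :
    #{γ : {γ : Finset ι // #γ = d + 1} | s ⊆ γ.1} = Fintype.card ι - d := by
  subst hs
  rw [← card_compl s]
  symm
  refine card_bij (fun z hz => ⟨insert z s, by rw [card_insert_of_notMem (mem_compl.1 hz)]⟩)
    (fun z _ => by simp [subset_insert]) (fun z hz z' _ h => ?_) fun γ hγ => ?_
  · exact (insert_inj (mem_compl.1 hz)).1 (Subtype.mk.inj h)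
  · obtain ⟨z, hz, hzγ⟩ := exists_eq_insert_iff.2 ⟨(mem_filter.1 hγ).2, γ.2.symm⟩
    exact ⟨z, mem_compl.2 hz, Subtype.ext hzγ⟩

lemma card_subsets_of_card_pred {s : Finset ι} {e : ℕ} (hs : #s = e + 1) :
    #{τ : {τ : Finset ι // #τ = e} | τ.1 ⊆ s} = e + 1 := by
  rw [← hs]
  symm
  refine card_bij (fun z hz => ⟨s.erase z, by rw [card_erase_of_mem hz, hs, Nat.add_sub_cancel]⟩)
    (fun z _ => by simp [erase_subset]) (fun z hz z' _ h => ?_) fun τ hτ => ?_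
  · exact (erase_inj s hz).1 (Subtype.mk.inj h)
  · obtain ⟨z, hz, hτz⟩ := eq_erase_of_subset_of_card_succ (mem_filter.1 hτ).2 (by rw [τ.2, hs])
    exact ⟨z, (mem_sdiff.1 hz).1, Subtype.ext hτz.symm⟩

lemma card_common_supersets_le {s t : Finset ι} {d : ℕ} (hs : #s = d) (ht : #t = d)
    (hst : s ≠ t) :
    #{γ : {γ : Finset ι // #γ = d + 1} | s ⊆ γ.1 ∧ t ⊆ γ.1} ≤
      if #(symmDiff s t) = 2 then 1 else 0 := by
  have key : ∀ γ : {γ : Finset ι // #γ = d + 1}, s ⊆ γ.1 → t ⊆ γ.1 →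
      γ.1 = s ∪ t ∧ #(symmDiff s t) = 2 := by
    intro γ hsγ htγ
    have hunion : #(t \ s) + d = #(t ∪ s) := hs ▸ card_sdiff_add_card t s
    have hle : #(t ∪ s) ≤ d + 1 := γ.2 ▸ card_le_card (union_subset htγ hsγ)
    have hpos := one_le_card_sdiff_of_card_eq (hs.trans ht.symm) hst
    refine ⟨(eq_of_subset_of_card_le (union_subset hsγ htγ) ?_).symm, ?_⟩
    · rw [γ.2, union_comm]
      omega
    · rw [card_symmDiff_of_card_eq (hs.trans ht.symm)]
      omega
  split_ifs with h
  · refine card_le_one.2 fun γ hγ γ' hγ' => Subtype.ext ?_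
    rw [mem_filter] at hγ hγ'
    rw [(key γ hγ.2.1 hγ.2.2).1, (key γ' hγ'.2.1 hγ'.2.2).1]
  · exact (card_eq_zero.2 (filter_eq_empty_iff.2 fun γ _ hγ => h (key γ hγ.1 hγ.2).2)).le

lemma card_common_subsets_le {s t : Finset ι} {e : ℕ} (hs : #s = e + 1) (ht : #t = e + 1)
    (hst : s ≠ t) :
    #{τ : {τ : Finset ι // #τ = e} | τ.1 ⊆ s ∧ τ.1 ⊆ t} ≤
      if #(symmDiff s t) = 2 then 1 else 0 := by
  have key : ∀ τ : {τ : Finset ι // #τ = e}, τ.1 ⊆ s → τ.1 ⊆ t →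
      τ.1 = s ∩ t ∧ #(symmDiff s t) = 2 := by
    intro τ hτs hτt
    have hinter : #(t ∩ s) + #(t \ s) = e + 1 := ht ▸ card_inter_add_card_sdiff t s
    have hle : e ≤ #(t ∩ s) := τ.2 ▸ card_le_card (subset_inter hτt hτs)
    have hpos := one_le_card_sdiff_of_card_eq (hs.trans ht.symm) hst
    refine ⟨eq_of_subset_of_card_le (subset_inter hτs hτt) ?_, ?_⟩
    · rw [τ.2, inter_comm]
      omega
    · rw [card_symmDiff_of_card_eq (hs.trans ht.symm)]
      omega
  split_ifs with h
  · refine card_le_one.2 fun τ hτ τ' hτ' => Subtype.ext ?_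
    rw [mem_filter] at hτ hτ'
    rw [(key τ hτ.2.1 hτ.2.2).1, (key τ' hτ'.2.1 hτ'.2.2).1]
  · exact (card_eq_zero.2 (filter_eq_empty_iff.2 fun τ _ hτ => h (key τ hτ.1 hτ.2).2)).le

end Counting

section IncSign

variable {ι : Type*} [LinearOrder ι]

def incSign (s t : Finset ι) : ℝ :=
  if s ⊆ t then (-1) ^ #{y ∈ t | ∃ x ∈ t \ s, y < x} else 0

lemma incSign_of_not_subset {s t : Finset ι} (h : ¬ s ⊆ t) : incSign s t = 0 := if_neg h

lemma abs_incSign (s t : Finset ι) : |incSign s t| = if s ⊆ t then 1 else 0 := by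
  unfold incSign
  split_ifs <;> simp

lemma incSign_erase {t : Finset ι} {x : ι} (hx : x ∈ t) :
    incSign (t.erase x) t = (-1) ^ #{y ∈ t | y < x} := by
  simp [incSign, sdiff_erase_self hx, erase_subset]

lemma incSign_insert_of_forall_le {s : Finset ι} {x : ι} (hx : x ∉ s) (hmin : ∀ y ∈ s, x ≤ y) :
    incSign s (insert x s) = 1 := by
  have := incSign_erase (mem_insert_self x s)
  rw [erase_insert hx] at this
  rw [this, filter_false_of_mem fun y hy => ?_, card_empty, pow_zero]
  rcases mem_insert.1 hy with rfl | hy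
  exacts [lt_irrefl y, not_lt.2 (hmin y hy)]

lemma incSign_erase_mul_add_incSign_erase_mul {t : Finset ι} {x y : ι} (hx : x ∈ t) (hy : y ∈ t)
    (hxy : x < y) :
    incSign ((t.erase y).erase x) (t.erase x) * incSign (t.erase x) t +
      incSign ((t.erase y).erase x) (t.erase y) * incSign (t.erase y) t = 0 := by
  rw [incSign_erase hx, incSign_erase hy, incSign_erase (mem_erase.2 ⟨hxy.ne, hx⟩),
    erase_right_comm, incSign_erase (mem_erase.2 ⟨hxy.ne', hy⟩), filter_erase, filter_erase,
    card_erase_of_mem (by simp [hx, hxy]), erase_eq_of_notMem (by simp [hxy.le])]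
  obtain ⟨m, hm⟩ : ∃ m, #{z ∈ t | z < y} = m + 1 :=
    Nat.exists_eq_add_one.2 (card_pos.2 ⟨x, mem_filter.2 ⟨hx, hxy⟩⟩)
  rw [hm, Nat.add_sub_cancel, pow_succ]
  ring

theorem sum_incSign_mul_incSign_eq_zero [Fintype ι] {k : ℕ} {σ γ : Finset ι} (hσ : #σ = k)
    (hγ : #γ = k + 2) :
    ∑ β : {β : Finset ι // #β = k + 1}, incSign σ β.1 * incSign β.1 γ = 0 := by
  by_cases hσγ : σ ⊆ γ
  swap
  · refine sum_eq_zero fun β _ => ?_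
    by_cases hσβ : σ ⊆ β.1
    · rw [incSign_of_not_subset fun hβγ => hσγ (hσβ.trans hβγ), mul_zero]
    · rw [incSign_of_not_subset hσβ, zero_mul]
  obtain ⟨x, y, hxy, hγσ⟩ : ∃ x y, x < y ∧ γ \ σ = {x, y} := by
    obtain ⟨x, y, hne, h⟩ := card_eq_two.1 (by rw [card_sdiff_of_subset hσγ]; omega)
    rcases hne.lt_or_gt with hlt | hlt
    exacts [⟨x, y, hlt, h⟩, ⟨y, x, hlt, by rw [h, pair_comm]⟩]
  have hx : x ∈ γ := (mem_sdiff.1 (hγσ ▸ mem_insert_self x {y})).1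
  have hy : y ∈ γ := (mem_sdiff.1 (hγσ ▸ mem_insert_of_mem (mem_singleton_self y))).1
  have hσ_eq : σ = (γ.erase y).erase x := by
    rw [← sdiff_singleton_eq_erase y γ, ← sdiff_insert, ← hγσ, Finset.sdiff_sdiff_eq_self hσγ]
  have hcard : ∀ z ∈ γ, #(γ.erase z) = k + 1 := fun z hz => by
    rw [card_erase_of_mem hz, hγ]; rfl
  rw [sum_eq_add_of_mem (⟨γ.erase x, hcard x hx⟩ : {β : Finset ι // #β = k + 1})
    ⟨γ.erase y, hcard y hy⟩ (mem_univ _) (mem_univ _) ?_ ?_]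
  · rw [hσ_eq]
    exact incSign_erase_mul_add_incSign_erase_mul hx hy hxy
  · intro h
    have hxy' : x ∈ γ.erase y := mem_erase.2 ⟨hxy.ne, hx⟩
    rw [← Subtype.mk.inj h] at hxy'
    exact notMem_erase x γ hxy'
  · rintro β - hβ
    by_cases hσβ : σ ⊆ β.1
    swap
    · rw [incSign_of_not_subset hσβ, zero_mul]
    by_cases hβγ : β.1 ⊆ γ
    swap
    · rw [incSign_of_not_subset hβγ, mul_zero]
    obtain ⟨z, hz, hβz⟩ := eq_erase_of_subset_of_card_succ hβγ (by rw [β.2, hγ])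
    have hzσ : z ∈ γ \ σ := mem_sdiff.2 ⟨(mem_sdiff.1 hz).1, fun h => (mem_sdiff.1 hz).2 (hσβ h)⟩
    rw [hγσ, mem_insert, mem_singleton] at hzσ
    rcases hzσ with rfl | rfl
    exacts [(hβ.1 (Subtype.ext hβz)).elim, (hβ.2 (Subtype.ext hβz)).elim]

end IncSign

lemma Wj_apply {n k : ℕ} (α : {s : Finset (Fin n) // s.card = k})
    (β : {s : Finset (Fin n) // s.card = k + 1}) : Wj n k α β = incSign α.1 β.1 := by
  simp only [Wj, incSign]
  congr!

theorem Wj_mul_Wj (n k : ℕ) : Wj n k * Wj n (k + 1) = 0 := by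
  ext σ γ
  simp only [mul_apply, Wj_apply, Matrix.zero_apply]
  exact sum_incSign_mul_incSign_eq_zero σ.2 γ.2

lemma Wj_col_mem_span (m k : ℕ) (β : {s : Finset (Fin (m + 1)) // #s = k + 1}) :
    (Wj (m + 1) k)ᵀ β ∈ Submodule.span ℝ
      (Set.range fun b : {b : {s : Finset (Fin (m + 1)) // #s = k + 1} // 0 ∈ b.1} =>
        (Wj (m + 1) k)ᵀ b.1) := by
  by_cases h0 : 0 ∈ β.1
  · exact Submodule.subset_span ⟨⟨β, h0⟩, rfl⟩
  -- Column `insert 0 β` of `Wj (m + 1) (k + 1)` is a relation among the columns of `Wj (m + 1) k`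
  -- in which `β` has coefficient `1` and every other set with nonzero coefficient contains `0`.
  let γ : {s : Finset (Fin (m + 1)) // #s = k + 1 + 1} :=
    ⟨insert 0 β.1, by rw [card_insert_of_notMem h0, β.2]⟩
  have hrel : ∑ b, Wj (m + 1) (k + 1) b γ • (Wj (m + 1) k)ᵀ b = 0 := by
    ext σ
    have := congrFun (congrFun (Wj_mul_Wj (m + 1) k) σ) γ
    rw [mul_apply] at this
    simpa [Finset.sum_apply, mul_comm] using this
  have hβ : Wj (m + 1) (k + 1) β γ = 1 :=
    (Wj_apply _ _).trans (incSign_insert_of_forall_le h0 fun y _ => Fin.zero_le y)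
  rw [← add_sum_erase _ _ (mem_univ β), hβ, one_smul, add_eq_zero_iff_eq_neg] at hrel
  rw [hrel]
  refine neg_mem (Submodule.sum_mem _ fun b hb => ?_)
  by_cases h0b : 0 ∈ b.1
  · exact Submodule.smul_mem _ _ (Submodule.subset_span ⟨⟨b, h0b⟩, rfl⟩)
  have hbγ : ¬ b.1 ⊆ γ.1 := fun hbγ => ne_of_mem_erase hb <| Subtype.ext <|
    eq_of_subset_of_card_le (fun z hz => (mem_insert.1 (hbγ hz)).resolve_left
      fun h => h0b (h ▸ hz)) (by rw [b.2, β.2])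
  rw [Wj_apply, incSign_of_not_subset hbγ, zero_smul]
  exact Submodule.zero_mem _

theorem rank_Wj_le (n k : ℕ) : (Wj n k).rank ≤ (n - 1).choose k := by
  cases n with
  | zero => exact (Wj 0 k).rank_le_card_width.trans (by simp [Fintype.card_finset_len])
  | succ m =>
    rw [Matrix.rank, Matrix.range_mulVecLin]
    calc finrank ℝ (Submodule.span ℝ (Set.range (Wj (m + 1) k)ᵀ))
        ≤ finrank ℝ (Submodule.span ℝ (Set.range
            fun b : {b : {s : Finset (Fin (m + 1)) // #s = k + 1} // 0 ∈ b.1} =>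
              (Wj (m + 1) k)ᵀ b.1)) :=
          Submodule.finrank_mono <|
            Submodule.span_le.2 (Set.range_subset_iff.2 (Wj_col_mem_span m k))
      _ ≤ Fintype.card {b : {s : Finset (Fin (m + 1)) // #s = k + 1} // 0 ∈ b.1} :=
          finrank_range_le_card _
      _ = m.choose k := by
          rw [Fintype.card_subtype, card_filter_mem_eq_choose, Fintype.card_fin, Nat.add_sub_cancel]

lemma exists_mulVec_eq_zero_of_rank_lt {K m n : Type*} [Field K] [Fintype m] [Fintype n]
    (A : Matrix m n K) (h : A.rank < Fintype.card n) : ∃ x ≠ 0, A *ᵥ x = 0 := by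
  obtain ⟨x, hx, hx0⟩ := Submodule.exists_mem_ne_zero_of_ne_bot
    (LinearMap.ker_ne_bot_of_finrank_lt (f := A.mulVecLin.rangeRestrict) (by simpa [rank] using h))
  exact ⟨x, hx0, by simpa using hx⟩

theorem exists_le_card_filter_of_mulVec_eq_zero {ι : Type*} [Fintype ι] [DecidableEq ι]
    {M : Matrix ι ι ℝ} {p : ι → ι → Prop} [DecidableRel p] {c : ℕ} (hdiag : ∀ a, M a a = c)
    (hoff : ∀ a b, a ≠ b → |M a b| ≤ if p a b then 1 else 0) {x : ι → ℝ} (hx : x ≠ 0)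
    (hMx : M *ᵥ x = 0) : ∃ a, c ≤ #{b | p a b} := by
  have : Nonempty ι := not_isEmpty_iff.1 fun h => hx (funext fun a => h.elim a)
  obtain ⟨a, -, hmax⟩ := exists_max_image univ (fun b => |x b|) univ_nonempty
  have hxa : 0 < |x a| := by
    by_contra! h
    exact hx (funext fun b => abs_nonpos_iff.1 ((hmax b (mem_univ b)).trans h))
  have hrow : M a a * x a = -∑ b ∈ univ.erase a, M a b * x b := by
    have := congrFun hMx a
    rw [mulVec, dotProduct, ← add_sum_erase _ _ (mem_univ a)] at this
    exact eq_neg_of_add_eq_zero_left this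
  refine ⟨a, Nat.cast_le.1 (le_of_mul_le_mul_right ?_ hxa)⟩
  calc (c : ℝ) * |x a| = |∑ b ∈ univ.erase a, M a b * x b| := by
        rw [← abs_neg (∑ b ∈ univ.erase a, M a b * x b), ← hrow, abs_mul, hdiag, Nat.abs_cast]
    _ ≤ ∑ b ∈ univ.erase a, |M a b| * |x b| := by
        simpa only [abs_mul] using abs_sum_le_sum_abs (fun b => M a b * x b) (univ.erase a)
    _ ≤ ∑ b ∈ univ.erase a, (if p a b then 1 else 0) * |x a| :=
        sum_le_sum fun b hb => mul_le_mul (hoff a b (ne_of_mem_erase hb).symm)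
          (hmax b (mem_univ b)) (abs_nonneg _) (by positivity)
    _ ≤ ∑ b, (if p a b then 1 else 0) * |x a| :=
        sum_le_sum_of_subset_of_nonneg (subset_univ _) fun _ _ _ => by positivity
    _ = #{b | p a b} * |x a| := by rw [← sum_mul, sum_boole]

theorem exists_mem_le_card_filter_of_rank_lt {ι κ : Type*} [Fintype ι] [DecidableEq ι]
    [Fintype κ] (A : Matrix ι κ ℝ) (S : Finset ι) (hA : A.rank < #S) (p : ι → ι → Prop)
    [DecidableRel p] (c : ℕ) (hdiag : ∀ a ∈ S, A a ⬝ᵥ A a = c)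
    (hoff : ∀ a ∈ S, ∀ b ∈ S, a ≠ b → |A a ⬝ᵥ A b| ≤ if p a b then 1 else 0) :
    ∃ a ∈ S, c ≤ #{b ∈ S | p a b} := by
  let B : Matrix S κ ℝ := A.submatrix (↑) id
  have hB : Bᵀ.rank < Fintype.card S := by
    rw [rank_transpose, Fintype.card_coe]
    exact (rank_submatrix_le A _ _).trans_lt hA
  obtain ⟨x, hx, hBx⟩ := exists_mulVec_eq_zero_of_rank_lt Bᵀ hB
  obtain ⟨a, ha⟩ := exists_le_card_filter_of_mulVec_eq_zero (M := B * Bᵀ) (p := fun a b => p a b)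
    (fun a => hdiag a a.2) (fun a b hab => hoff a a.2 b b.2 (Subtype.coe_ne_coe.2 hab)) hx
    (by rw [← mulVec_mulVec, hBx, mulVec_zero])
  refine ⟨a, a.2, ha.trans (card_le_card_of_injOn (↑) (fun b hb => ?_) Subtype.val_injective.injOn)⟩
  simpa using hb

section SignVector

variable {κ : Type*} [Fintype κ] {u v : κ → ℝ} {P Q : κ → Prop} [DecidablePred P]
  [DecidablePred Q]

lemma sum_mul_self_eq_card_filter (hu : ∀ γ, |u γ| = if P γ then 1 else 0) :
    ∑ γ, u γ * u γ = #{γ | P γ} := by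
  simp_rw [← abs_mul_abs_self (u _), hu, ite_zero_mul_ite_zero, and_self, mul_one, sum_boole]

lemma abs_sum_mul_le_card_filter (hu : ∀ γ, |u γ| = if P γ then 1 else 0)
    (hv : ∀ γ, |v γ| = if Q γ then 1 else 0) :
    |∑ γ, u γ * v γ| ≤ #{γ | P γ ∧ Q γ} := by
  calc |∑ γ, u γ * v γ| ≤ ∑ γ, |u γ| * |v γ| := by
        simpa only [abs_mul] using abs_sum_le_sum_abs (fun γ => u γ * v γ) univ
    _ = #{γ | P γ ∧ Q γ} := by simp_rw [hu, hv, ite_zero_mul_ite_zero, mul_one, sum_boole]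

end SignVector

theorem exists_mem_sub_le_card_adj_of_rank_Wj_lt {n d : ℕ}
    (S : Finset {s : Finset (Fin n) // #s = d}) (hS : (Wj n d).rank < #S) :
    ∃ α ∈ S, n - d ≤ #{β ∈ S | #(symmDiff α.1 β.1) = 2} := by
  refine exists_mem_le_card_filter_of_rank_lt (Wj n d) S hS _ (n - d) (fun α _ => ?_)
    fun α _ β _ hαβ => ?_
  · simp only [dotProduct, Wj_apply]
    rw [sum_mul_self_eq_card_filter fun γ => abs_incSign _ _,
      card_supersets_of_card_succ α.2, Fintype.card_fin]
  · simp only [dotProduct, Wj_apply]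
    refine (abs_sum_mul_le_card_filter (fun γ => abs_incSign _ _) fun γ => abs_incSign _ _).trans ?_
    have := card_common_supersets_le α.2 β.2 (Subtype.coe_ne_coe.2 hαβ)
    split_ifs at this ⊢ <;> exact_mod_cast this

theorem exists_mem_succ_le_card_adj_of_rank_Wj_lt {n e : ℕ}
    (S : Finset {s : Finset (Fin n) // #s = e + 1}) (hS : (Wj n e).rank < #S) :
    ∃ α ∈ S, e + 1 ≤ #{β ∈ S | #(symmDiff α.1 β.1) = 2} := by
  refine exists_mem_le_card_filter_of_rank_lt (Wj n e)ᵀ S (by rwa [rank_transpose]) _ (e + 1)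
    (fun α _ => ?_) fun α _ β _ hαβ => ?_
  · simp only [dotProduct, transpose_apply, Wj_apply]
    rw [sum_mul_self_eq_card_filter fun τ => abs_incSign _ _, card_subsets_of_card_pred α.2]
  · simp only [dotProduct, transpose_apply, Wj_apply]
    refine (abs_sum_mul_le_card_filter (fun τ => abs_incSign _ _) fun τ => abs_incSign _ _).trans ?_
    have := card_common_subsets_le α.2 β.2 (Subtype.coe_ne_coe.2 hαβ)
    split_ifs at this ⊢ <;> exact_mod_cast this

theorem stmt_15_general (n d : ℕ) (hd : 1 ≤ d)
    (S : Finset {s : Finset (Fin n) // s.card = d}) :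
    (S.card = (n - 1).choose d + 1 →
      ∃ α ∈ S, n - d ≤ (S.filter (fun β => (symmDiff α.1 β.1).card = 2)).card) ∧
    (S.card = (n - 1).choose (d - 1) + 1 →
      ∃ α ∈ S, d ≤ (S.filter (fun β => (symmDiff α.1 β.1).card = 2)).card) := by
  obtain ⟨e, rfl⟩ : ∃ e, d = e + 1 := ⟨d - 1, by omega⟩
  refine ⟨fun hS => exists_mem_sub_le_card_adj_of_rank_Wj_lt S ?_,
    fun hS => exists_mem_succ_le_card_adj_of_rank_Wj_lt S ?_⟩
  · rw [hS]
    exact Nat.lt_succ_of_le (rank_Wj_le n (e + 1))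
  · rw [hS, Nat.add_sub_cancel]
    exact Nat.lt_succ_of_le (rank_Wj_le n e)

/-- Let `n, d ≥ 1` with `n ≥ 2d`, and let `S` be a set of `d`-subsets of
an `n`-set (i.e. of vertices of the Johnson graph `J(n,d)`).
(i) If `|S| = C(n−1,d) + 1` then some `α ∈ S` has at least `n − d` neighbours in `S`
(the induced subgraph has maximum degree `≥ n − d`).
(ii) If `|S| = C(n−1,d−1) + 1` then some `α ∈ S` has at least `d` neighbours in `S`. -/
theorem stmt_15 (n d : ℕ) (hd : 1 ≤ d) (hn : 2 * d ≤ n)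
    (S : Finset {s : Finset (Fin n) // s.card = d}) :
    (S.card = (n - 1).choose d + 1 →
      ∃ α ∈ S, n - d ≤ (S.filter (fun β => (symmDiff α.1 β.1).card = 2)).card) ∧
    (S.card = (n - 1).choose (d - 1) + 1 →
      ∃ α ∈ S, d ≤ (S.filter (fun β => (symmDiff α.1 β.1).card = 2)).card) :=
  stmt_15_general n d hd S
end
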